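/- Let a b-specification be given whose induced geometric tree is regular, and define the lookup functions from the geometry: N(j, s, 𝓘) := j' if there exists a word v with σ(v) = s such that v·j' is a geometric neighbor of v·j at 𝓘, and ⊥ otherwise; F^p(j, s, 𝓘) := 𝓙 and Ω(j, s, s', 𝓘) := j' if there exist words v, v' with σ(v) = s, σ(v') = s', v' a geometric neighbor of v at 𝓙, and v'·j' a geometric neighbor of v·j at 𝓘, and ⊥ otherwise (these are well-defined by regularity). Define algebraic neighborship inductively: for nonempty words x, y of equal length, y is a depth-1 𝓘-neighbor of x if N(last(x), σ(parent(x)), 𝓘) = last(y) ≠ ⊥ and parent(y) = parent(x); for k ≥ 2, y is a depth-k 𝓘-neighbor of x if N(last(x), σ(parent(x)), 𝓘) = ⊥, 𝓙 := F^p(last(x), σ(parent(x)), 𝓘) ≠ ⊥, parent(y) is a depth-(k−1) 𝓙-neighbor of parent(x), and last(y) = Ω(last(x), σ(parent(x)), σ(parent(y)), 𝓘); y is an 𝓘-neighbor of x if it is a depth-k 𝓘-neighbor for some k ≥ 1. Then for all words x, y and every facet index set 𝓘: y is a geometric neighbor of x at 𝓘 if and only if y is an 𝓘-neighbor of x in the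 algebraic sense. -/

import Mathlib

open Matrix BigOperators

/-- A `b`-specification in dimension `d`: states `S` with root state `sr` and
child-state map `Sc` (every state reachable from `sr`), vertex counts `n s ≥ 1`,
a root point matrix `Qr`, and transition matrices `M s j` (all column sums 1). -/
structure BSpec (d b : ℕ) (S : Type) where
  sr : S
  Sc : S → Fin b → S
  reach : ∀ s : S, ∃ w : List (Fin b), w.foldl Sc sr = s
  n : S → ℕ
  n_pos : ∀ s : S, 1 ≤ n s
  Qr : Matrix (Fin d) (Fin (n sr)) ℝ
  M : (s : S) → (j : Fin b) → Matrix (Fin (n s)) (Fin (n (Sc s j))) ℝ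
  M_trans : ∀ (s : S) (j : Fin b) (col : Fin (n (Sc s j))), ∑ i, M s j i col = 1

namespace BSpec

variable {d b : ℕ} {S : Type}

/-- The state `σ(w)` of the tree node given by the word `w` (digits read left to right,
`σ(ε) = s_r`, `σ(w·j) = S^c(σ(w), j)`). -/
def st (sp : BSpec d b S) (w : List (Fin b)) : S :=
  w.foldl sp.Sc sp.sr

/-- Helper for the point matrices: fold the transition matrices along a word. -/
def Qfrom (sp : BSpec d b S) :
    (s : S) → (w : List (Fin b)) → Matrix (Fin d) (Fin (sp.n s)) ℝ →
      Matrix (Fin d) (Fin (sp.n (w.foldl sp.Sc s))) ℝ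
  | _, [], Q => Q
  | s, j :: w, Q => sp.Qfrom (sp.Sc s j) w (Q * sp.M s j)

/-- The point matrix `Q(w)` of the tree node given by the word `w`
(`Q(ε) = Q^r`, `Q(w·j) = Q(w)·M^{σ(w),j}`). -/
def Qm (sp : BSpec d b S) (w : List (Fin b)) :
    Matrix (Fin d) (Fin (sp.n (sp.st w))) ℝ :=
  sp.Qfrom sp.sr w sp.Qr

end BSpec

/-- The `i`-th column of a matrix, as a point of `ℝ^d`. -/
def colFun {d m : ℕ} (Q : Matrix (Fin d) (Fin m) ℝ) (i : Fin m) : Fin d → ℝ :=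
  fun r => Q r i

/-- The convex hull of the columns of `Q`. -/
def convOf {d m : ℕ} (Q : Matrix (Fin d) (Fin m) ℝ) : Set (Fin d → ℝ) :=
  convexHull ℝ (Set.range (colFun Q))

/-- A face of a polytope `P`: the intersection of `P` with a supporting hyperplane. -/
def IsFace {d : ℕ} (P F : Set (Fin d → ℝ)) : Prop :=
  ∃ (c : Fin d → ℝ) (c₀ : ℝ), (∀ x ∈ P, c ⬝ᵥ x ≤ c₀) ∧ F = {x ∈ P | c ⬝ᵥ x = c₀}

open Classical in
/-- The dimension of a subset of `ℝ^d`: the dimension of its affine span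
(with the convention that the empty set has dimension `-1`). -/
noncomputable def setDim {d : ℕ} (s : Set (Fin d → ℝ)) : ℤ :=
  if s = ∅ then -1 else (Module.finrank ℝ (affineSpan ℝ s).direction : ℤ)

/-- A facet of a polytope `P`: a face of dimension `dim P - 1`. -/
def IsFacet {d : ℕ} (P F : Set (Fin d → ℝ)) : Prop :=
  IsFace P F ∧ setDim F = setDim P - 1

/-- The family of index sets (as subsets of `ℕ`) of facets of `conv(Q)`. -/
def idxFacets {d m : ℕ} (Q : Matrix (Fin d) (Fin m) ℝ) : Set (Set ℕ) :=
  {I | ∃ F : Set (Fin d → ℝ), IsFacet (convOf Q) F ∧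
    I = {i : ℕ | ∃ h : i < m, colFun Q ⟨i, h⟩ ∈ F}}

/-- The convex hull of the columns of `Q` whose index lies in `I`. -/
def facetOfIdx {d m : ℕ} (Q : Matrix (Fin d) (Fin m) ℝ) (I : Set ℕ) :
    Set (Fin d → ℝ) :=
  convexHull ℝ {x | ∃ i : Fin m, (i : ℕ) ∈ I ∧ x = colFun Q i}

/-- `τ : Q ∼ Q'`: the matrices have the same number of columns and the invertible
affine map `τ` carries the `i`-th column of `Q` to the `i`-th column of `Q'`. -/
def SimBy {d m m' : ℕ} (τ : (Fin d → ℝ) ≃ᵃ[ℝ] (Fin d → ℝ))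
    (Q : Matrix (Fin d) (Fin m) ℝ) (Q' : Matrix (Fin d) (Fin m') ℝ) : Prop :=
  m = m' ∧ ∀ (i : ℕ) (h : i < m) (h' : i < m'),
    colFun Q' ⟨i, h'⟩ = τ (colFun Q ⟨i, h⟩)

/-- `Q ∼ Q'`: some invertible affine map carries the columns of `Q` to those of `Q'`. -/
def Sim {d m m' : ℕ} (Q : Matrix (Fin d) (Fin m) ℝ)
    (Q' : Matrix (Fin d) (Fin m') ℝ) : Prop :=
  ∃ τ : (Fin d → ℝ) ≃ᵃ[ℝ] (Fin d → ℝ), SimBy τ Q Q'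

namespace BSpec

variable {d b : ℕ} {S : Type}

/-- `v'` is a geometric neighbor of `v` at the facet index set `I`:
`v` and `v'` are words of equal positive length, `I ∈ indexFacets(Q(v))`,
`conv(Q(v)) ∩ conv(Q(v'))` equals the facet of `conv(Q(v))` spanned by the
columns indexed by `I`, and this intersection is also a facet of `conv(Q(v'))`. -/
def GeomNbr (sp : BSpec d b S) (v v' : List (Fin b)) (I : Set ℕ) : Prop :=
  v.length = v'.length ∧ v ≠ [] ∧
  I ∈ idxFacets (sp.Qm v) ∧
  convOf (sp.Qm v) ∩ convOf (sp.Qm v') = facetOfIdx (sp.Qm v) I ∧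
  IsFacet (convOf (sp.Qm v')) (convOf (sp.Qm v) ∩ convOf (sp.Qm v'))

/-- Pre-regularity: (P1) equal states give affinely equivalent point matrices;
(P2) every node polytope is full-dimensional. -/
def PreRegular (sp : BSpec d b S) : Prop :=
  (∀ w w' : List (Fin b), sp.st w = sp.st w' → Sim (sp.Qm w) (sp.Qm w')) ∧
  (∀ w : List (Fin b), setDim (convOf (sp.Qm w)) = (d : ℤ))

/-- Regularity: pre-regularity together with (R1), (R2) and (R3). -/
def Regular (sp : BSpec d b S) : Prop :=
  sp.PreRegular ∧
  -- (R1)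
  (∀ (v₁ v₂ v₁' v₂' : List (Fin b)) (I : Set ℕ),
    sp.GeomNbr v₁ v₂ I → sp.GeomNbr v₁' v₂' I →
    sp.st v₁ = sp.st v₁' → sp.st v₂ = sp.st v₂' →
    ∃ τ : (Fin d → ℝ) ≃ᵃ[ℝ] (Fin d → ℝ),
      SimBy τ (sp.Qm v₁) (sp.Qm v₁') ∧ SimBy τ (sp.Qm v₂) (sp.Qm v₂')) ∧
  -- (R2)
  (∀ (w : List (Fin b)) (j : Fin b),
    convOf (sp.Qm (w ++ [j])) ⊆ convOf (sp.Qm w)) ∧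
  -- (R3)
  (∀ v v' : List (Fin b), v.length = v'.length →
    (setDim (convOf (sp.Qm v) ∩ convOf (sp.Qm v')) = (d : ℤ) → v = v') ∧
    (setDim (convOf (sp.Qm v) ∩ convOf (sp.Qm v')) = (d : ℤ) - 1 →
      ∃ I ∈ idxFacets (sp.Qm v), sp.GeomNbr v v' I))

end BSpec

namespace BSpec

variable {d b : ℕ} {S : Type}

open Classical in
/-- The lookup function `N(j, s, 𝓘)`, defined from the geometry. -/
noncomputable def Nlook (sp : BSpec d b S) (j : Fin b) (s : S) (I : Set ℕ) :
    Option (Fin b) :=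
  if h : ∃ j' : Fin b, ∃ v : List (Fin b),
      sp.st v = s ∧ sp.GeomNbr (v ++ [j]) (v ++ [j']) I
  then some h.choose else none

open Classical in
/-- The lookup function `F^p(j, s, 𝓘)`, defined from the geometry. -/
noncomputable def Fplook (sp : BSpec d b S) (j : Fin b) (s : S) (I : Set ℕ) :
    Option (Set ℕ) :=
  if h : ∃ J : Set ℕ, ∃ (v v' : List (Fin b)) (j' : Fin b),
      sp.st v = s ∧ sp.GeomNbr v v' J ∧ sp.GeomNbr (v ++ [j]) (v' ++ [j']) I
  then some h.choose else none

open Classical in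
/-- The lookup function `Ω(j, s, s', 𝓘)`, defined from the geometry. -/
noncomputable def Omlook (sp : BSpec d b S) (j : Fin b) (s s' : S) (I : Set ℕ) :
    Option (Fin b) :=
  if h : ∃ j' : Fin b, ∃ (v v' : List (Fin b)) (J : Set ℕ),
      sp.st v = s ∧ sp.st v' = s' ∧ sp.GeomNbr v v' J ∧
      sp.GeomNbr (v ++ [j]) (v' ++ [j']) I
  then some h.choose else none

/-- Algebraic depth-`k` `𝓘`-neighborship of words, defined inductively from
the lookup functions. -/
noncomputable def AlgNbr (sp : BSpec d b S) :
    ℕ → Set ℕ → List (Fin b) → List (Fin b) → Prop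
  | 0, _, _, _ => False
  | 1, I, x, y =>
      ∃ jx jy : Fin b, x.getLast? = some jx ∧ y.getLast? = some jy ∧
        y.dropLast = x.dropLast ∧
        sp.Nlook jx (sp.st x.dropLast) I = some jy
  | (k + 2), I, x, y =>
      ∃ jx jy : Fin b, x.getLast? = some jx ∧ y.getLast? = some jy ∧
        sp.Nlook jx (sp.st x.dropLast) I = none ∧
        ∃ J : Set ℕ, sp.Fplook jx (sp.st x.dropLast) I = some J ∧
          sp.AlgNbr (k + 1) J x.dropLast y.dropLast ∧
          sp.Omlook jx (sp.st x.dropLast) (sp.st y.dropLast) I = some jy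

end BSpec

/-!
The geometric neighbor relation obeys the same recursion on the last digit as the algebraic one,
so the two agree by induction on the length of the words. The recursion rests on three
consequences of regularity. A node has at most one geometric neighbor across a given facet: two
of them would both lie on the far side of the facet's hyperplane and would overlap in full
dimension, contradicting (R3). If two children of different parents are neighbors, the parents
are neighbors (by (R2) and (R3)), across the unique facet of the first parent containing the
children's common facet. Finally (P1) and (R1) carry neighbor configurations between nodes of
equal states, so the choices made in defining `N`, `F^p` and `Ω` do not matter.
-/

open Set Filter Topology

section Dimension

variable {d : ℕ}

lemma setDim_of_nonempty {s : Set (Fin d → ℝ)} (hs : s.Nonempty) :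
    setDim s = Module.finrank ℝ (affineSpan ℝ s).direction := by
  simp [setDim, hs.ne_empty]

@[simp] lemma setDim_empty : setDim (∅ : Set (Fin d → ℝ)) = -1 := by
  simp [setDim]

lemma neg_one_le_setDim (s : Set (Fin d → ℝ)) : -1 ≤ setDim s := by
  rcases s.eq_empty_or_nonempty with rfl | hs
  · simp
  · rw [setDim_of_nonempty hs]; omega

lemma nonempty_of_setDim_nonneg {s : Set (Fin d → ℝ)} (h : 0 ≤ setDim s) : s.Nonempty := by
  rw [Set.nonempty_iff_ne_empty]
  rintro rfl
  simp at h

lemma setDim_le (s : Set (Fin d → ℝ)) : setDim s ≤ d := by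
  rcases s.eq_empty_or_nonempty with rfl | hs
  · simp
  · rw [setDim_of_nonempty hs]
    exact_mod_cast (Submodule.finrank_le _).trans_eq (Module.finrank_fin_fun ℝ)

lemma setDim_mono {s t : Set (Fin d → ℝ)} (h : s ⊆ t) : setDim s ≤ setDim t := by
  rcases s.eq_empty_or_nonempty with rfl | hs
  · exact setDim_empty.trans_le (neg_one_le_setDim t)
  · rw [setDim_of_nonempty hs, setDim_of_nonempty (hs.mono h)]
    exact_mod_cast Submodule.finrank_mono
      (AffineSubspace.direction_le (affineSpan_mono ℝ h))

lemma setDim_affineSpan (s : Set (Fin d → ℝ)) :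
    setDim (affineSpan ℝ s : Set (Fin d → ℝ)) = setDim s := by
  rcases s.eq_empty_or_nonempty with rfl | hs
  · simp
  · rw [setDim_of_nonempty hs, setDim_of_nonempty ((affineSpan_nonempty ℝ).2 hs),
      AffineSubspace.affineSpan_coe]

lemma setDim_image (τ : (Fin d → ℝ) ≃ᵃ[ℝ] (Fin d → ℝ)) (s : Set (Fin d → ℝ)) :
    setDim (τ '' s) = setDim s := by
  rcases s.eq_empty_or_nonempty with rfl | hs
  · simp
  · rw [setDim_of_nonempty hs, setDim_of_nonempty (hs.image τ),
      ← AffineEquiv.coe_toAffineMap, ← AffineSubspace.map_span,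
      AffineSubspace.map_direction]
    exact_mod_cast τ.linear.finrank_map_eq _

lemma affineSpan_eq_of_subset_of_setDim_eq {s t : Set (Fin d → ℝ)} (hst : s ⊆ t)
    (h : setDim s = setDim t) : affineSpan ℝ s = affineSpan ℝ t := by
  rcases s.eq_empty_or_nonempty with rfl | ⟨p, hp⟩
  · rw [setDim_empty, eq_comm] at h
    rcases t.eq_empty_or_nonempty with rfl | ht
    · rfl
    · rw [setDim_of_nonempty ht] at h; omega
  · rw [setDim_of_nonempty ⟨p, hp⟩, setDim_of_nonempty ⟨p, hst hp⟩, Nat.cast_inj] at h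
    refine AffineSubspace.ext_of_direction_eq ?_
      ⟨p, subset_affineSpan ℝ _ hp, subset_affineSpan ℝ _ (hst hp)⟩
    exact Submodule.eq_of_le_of_finrank_eq
      (AffineSubspace.direction_le (affineSpan_mono ℝ hst)) h

lemma setDim_lt_of_mem_notMem_affineSpan {s t : Set (Fin d → ℝ)} (hst : s ⊆ t)
    {z : Fin d → ℝ} (hz : z ∈ t) (hzs : z ∉ affineSpan ℝ s) : setDim s < setDim t :=
  (setDim_mono hst).lt_of_ne fun h =>
    hzs (affineSpan_eq_of_subset_of_setDim_eq hst h ▸ subset_affineSpan ℝ t hz)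

lemma exists_mem_notMem_affineSpan_of_setDim_lt {s t : Set (Fin d → ℝ)}
    (h : setDim s < setDim t) : ∃ z ∈ t, z ∉ affineSpan ℝ s := by
  by_contra! hts
  have := (setDim_mono hts).trans_eq (setDim_affineSpan s)
  omega

end Dimension

section Faces

variable {d : ℕ}

lemma vectorSpan_le_ker_dotProduct {F : Set (Fin d → ℝ)} {c : Fin d → ℝ} {c₀ : ℝ}
    (hF : ∀ x ∈ F, c ⬝ᵥ x = c₀) :
    vectorSpan ℝ F ≤ LinearMap.ker (dotProductEquiv ℝ (Fin d) c) := by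
  rw [vectorSpan_def, Submodule.span_le]
  rintro _ ⟨x, hx, y, hy, rfl⟩
  simp [dotProduct_sub, hF x hx, hF y hy]

lemma dotProduct_eq_of_mem_affineSpan {F : Set (Fin d → ℝ)} {c : Fin d → ℝ} {c₀ : ℝ}
    (hF : ∀ x ∈ F, c ⬝ᵥ x = c₀) {z : Fin d → ℝ} (hz : z ∈ affineSpan ℝ F) :
    c ⬝ᵥ z = c₀ := by
  obtain ⟨p, hp⟩ := (affineSpan_nonempty ℝ).1 ⟨z, hz⟩
  have hzp : z -ᵥ p ∈ vectorSpan ℝ F := by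
    rw [← direction_affineSpan]
    exact AffineSubspace.vsub_mem_direction hz (subset_affineSpan ℝ F hp)
  have := vectorSpan_le_ker_dotProduct hF hzp
  simp only [LinearMap.mem_ker, dotProductEquiv_apply_apply, vsub_eq_sub,
    dotProduct_sub, hF p hp, sub_eq_zero] at this
  exact this

lemma exists_dotProduct_comp_eq (f : (Fin d → ℝ) →ᵃ[ℝ] (Fin d → ℝ)) (c : Fin d → ℝ) :
    ∃ (c' : Fin d → ℝ) (k : ℝ), ∀ y, c ⬝ᵥ f y = c' ⬝ᵥ y + k := by
  refine ⟨(dotProductEquiv ℝ (Fin d)).symm (dotProductEquiv ℝ (Fin d) c ∘ₗ f.linear),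
    c ⬝ᵥ f 0, fun y => ?_⟩
  have hf : f y = f.linear y + f 0 := by simpa using f.map_vadd 0 y
  have hc' := congrArg (· y) ((dotProductEquiv ℝ (Fin d)).apply_symm_apply
    (dotProductEquiv ℝ (Fin d) c ∘ₗ f.linear))
  simp only [dotProductEquiv_apply_apply, LinearMap.coe_comp, Function.comp_apply] at hc'
  rw [hf, dotProduct_add, hc']

lemma IsFace.image {P F : Set (Fin d → ℝ)} (hF : IsFace P F)
    (τ : (Fin d → ℝ) ≃ᵃ[ℝ] (Fin d → ℝ)) : IsFace (τ '' P) (τ '' F) := by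
  obtain ⟨c, c₀, hle, rfl⟩ := hF
  obtain ⟨c', k, hc'⟩ := exists_dotProduct_comp_eq τ.symm.toAffineMap c
  have hτ : ∀ x, c ⬝ᵥ x = c' ⬝ᵥ τ x + k := fun x => by simpa using hc' (τ x)
  refine ⟨c', c₀ - k, ?_, ?_⟩
  · rintro _ ⟨x, hx, rfl⟩
    linarith [hle x hx, hτ x]
  · ext y
    simp only [mem_image, mem_ofPred_eq]
    constructor
    · rintro ⟨x, ⟨hx, hxc⟩, rfl⟩
      exact ⟨⟨x, hx, rfl⟩, by linarith [hτ x]⟩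
    · rintro ⟨⟨x, hx, rfl⟩, hxc⟩
      exact ⟨x, ⟨hx, by linarith [hτ x]⟩, rfl⟩

lemma IsFacet.image {P F : Set (Fin d → ℝ)} (hF : IsFacet P F)
    (τ : (Fin d → ℝ) ≃ᵃ[ℝ] (Fin d → ℝ)) : IsFacet (τ '' P) (τ '' F) :=
  ⟨hF.1.image τ, by rw [setDim_image, setDim_image, hF.2]⟩

lemma IsFace.isExtreme {P F : Set (Fin d → ℝ)} (hF : IsFace P F) : IsExtreme ℝ P F := by
  obtain ⟨c, c₀, hle, rfl⟩ := hF
  refine ⟨fun x hx => hx.1, fun x₁ hx₁ x₂ hx₂ x ⟨_, hxc⟩ ⟨a, b, ha, hb, hab, hx⟩ => ⟨hx₁, ?_⟩⟩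
  have hsum : a * (c ⬝ᵥ x₁) + b * (c ⬝ᵥ x₂) = c₀ := by
    rw [← hxc, ← hx, dotProduct_add, dotProduct_smul, dotProduct_smul, smul_eq_mul,
      smul_eq_mul]
  have hc₀ : a * c₀ + b * c₀ = c₀ := by rw [← add_mul, hab, one_mul]
  refine le_antisymm (hle x₁ hx₁) (not_lt.1 fun hlt => ?_)
  linarith [mul_lt_mul_of_pos_left hlt ha, mul_le_mul_of_nonneg_left (hle x₂ hx₂) hb.le]

lemma IsFace.eq_inter_affineSpan {P F : Set (Fin d → ℝ)} (hF : IsFace P F) :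
    F = P ∩ affineSpan ℝ F := by
  refine Subset.antisymm (fun x hx => ⟨hF.isExtreme.subset hx, subset_affineSpan ℝ F hx⟩) ?_
  obtain ⟨c, c₀, -, rfl⟩ := hF
  exact fun x ⟨hxP, hxF⟩ => ⟨hxP, dotProduct_eq_of_mem_affineSpan (fun y hy => hy.2) hxF⟩

lemma IsFacet.exists_affineSpan_eq_hyperplane {P F : Set (Fin d → ℝ)} (hF : IsFacet P F)
    (hP : setDim P = d) (hd : 0 < d) :
    ∃ (c : Fin d → ℝ) (c₀ : ℝ), (∀ x ∈ P, c ⬝ᵥ x ≤ c₀) ∧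
      (affineSpan ℝ F : Set (Fin d → ℝ)) = {x | c ⬝ᵥ x = c₀} := by
  obtain ⟨⟨c, c₀, hle, hFP⟩, hdim⟩ := hF
  have hFc : ∀ x ∈ F, c ⬝ᵥ x = c₀ := fun x hx => (hFP ▸ hx).2
  obtain ⟨p, hp⟩ := nonempty_of_setDim_nonneg (s := F) (by omega)
  have hc : c ≠ 0 := by
    rintro rfl
    have hc₀ : c₀ = 0 := by simpa using (hFc p hp).symm
    have hFeq : F = P := by rw [hFP]; ext x; simp [hc₀]
    rw [hFeq] at hdim; omega
  have hker : (affineSpan ℝ F).direction = LinearMap.ker (dotProductEquiv ℝ (Fin d) c) := by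
    refine Submodule.eq_of_le_of_finrank_eq
      ((direction_affineSpan ℝ F).trans_le (vectorSpan_le_ker_dotProduct hFc)) ?_
    have h1 := Module.Dual.finrank_ker_add_one_of_ne_zero
      ((dotProductEquiv ℝ (Fin d)).map_ne_zero_iff.2 hc)
    rw [setDim_of_nonempty ⟨p, hp⟩, hP] at hdim
    simp only [Module.finrank_fin_fun] at h1
    omega
  refine ⟨c, c₀, hle, Set.ext fun z => ?_⟩
  rw [SetLike.mem_coe, ← AffineSubspace.vsub_right_mem_direction_iff_mem
    (subset_affineSpan ℝ F hp), hker]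
  simp [dotProduct_sub, hFc p hp, sub_eq_zero]

lemma IsFace.subset_halfspace_or {Y F : Set (Fin d → ℝ)} (hY : Convex ℝ Y)
    (hF : IsFace Y F) {c : Fin d → ℝ} {c₀ : ℝ}
    (hspan : (affineSpan ℝ F : Set (Fin d → ℝ)) = {x | c ⬝ᵥ x = c₀}) :
    (∀ y ∈ Y, c ⬝ᵥ y ≤ c₀) ∨ (∀ y ∈ Y, c₀ ≤ c ⬝ᵥ y) := by
  by_contra! h
  obtain ⟨⟨y₁, hy₁, h₁⟩, ⟨y₂, hy₂, h₂⟩⟩ := h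
  set a := c ⬝ᵥ y₁
  set b := c ⬝ᵥ y₂
  have hab : 0 < a - b := by linarith
  have hz : ((c₀ - b) / (a - b)) • y₁ + ((a - c₀) / (a - b)) • y₂ ∈ F := by
    refine hF.eq_inter_affineSpan.superset ⟨hY hy₁ hy₂ (by positivity) (by positivity)
      (by field_simp; ring), ?_⟩
    rw [hspan, mem_ofPred_eq, dotProduct_add, dotProduct_smul,
      dotProduct_smul, smul_eq_mul, smul_eq_mul]
    field_simp
    ring
  have hy₁F := hF.isExtreme.left_mem_of_mem_openSegment hy₁ hy₂ hz
    ⟨_, _, by positivity, by positivity, by field_simp; ring, rfl⟩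
  have := subset_affineSpan ℝ F hy₁F
  rw [hspan] at this
  exact h₁.ne' this

end Faces

section Polytope

variable {d m : ℕ}

lemma convex_convOf (Q : Matrix (Fin d) (Fin m) ℝ) : Convex ℝ (convOf Q) :=
  convex_convexHull ℝ _

lemma convex_facetOfIdx (Q : Matrix (Fin d) (Fin m) ℝ) (I : Set ℕ) :
    Convex ℝ (facetOfIdx Q I) :=
  convex_convexHull ℝ _

/-- Krein–Milman: a face is the convex hull of its extreme points, which are extreme points of
the polytope and hence columns of `Q`. -/
lemma IsFace.eq_facetOfIdx {Q : Matrix (Fin d) (Fin m) ℝ} {F : Set (Fin d → ℝ)}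
    (hF : IsFace (convOf Q) F) :
    F = facetOfIdx Q {i | ∃ h : i < m, colFun Q ⟨i, h⟩ ∈ F} := by
  set E := {x | ∃ i : Fin m, (i : ℕ) ∈ {i | ∃ h : i < m, colFun Q ⟨i, h⟩ ∈ F} ∧
    x = colFun Q i}
  have hEF : E ⊆ F := by rintro _ ⟨i, ⟨_, hi⟩, rfl⟩; exact hi
  have hconv : Convex ℝ F := hF.eq_inter_affineSpan ▸ (convex_convOf Q).inter
    (affineSpan ℝ F).convex
  refine Subset.antisymm ?_ (convexHull_min hEF hconv)
  have hcomp : IsCompact F := by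
    rw [hF.eq_inter_affineSpan]
    exact ((finite_range _).isCompact_convexHull (𝕜 := ℝ)).inter_right
      (affineSpan ℝ F).closed_of_finiteDimensional
  have hext : F.extremePoints ℝ ⊆ E := fun x hx => by
    obtain ⟨i, rfl⟩ := extremePoints_convexHull_subset
      (hF.isExtreme.extremePoints_subset_extremePoints hx)
    exact ⟨i, ⟨i.2, hx.1⟩, rfl⟩
  have hEfin : E.Finite := (finite_range (colFun Q)).subset fun _ ⟨i, _, hx⟩ => ⟨i, hx.symm⟩
  calc F = closure (convexHull ℝ (F.extremePoints ℝ)) :=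
        (closure_convexHull_extremePoints hcomp hconv).symm
    _ ⊆ closure (convexHull ℝ E) := closure_mono (convexHull_mono hext)
    _ = facetOfIdx Q _ := (hEfin.isCompact_convexHull (𝕜 := ℝ)).isClosed.closure_eq

lemma isFacet_facetOfIdx {Q : Matrix (Fin d) (Fin m) ℝ} {I : Set ℕ} (hI : I ∈ idxFacets Q) :
    IsFacet (convOf Q) (facetOfIdx Q I) := by
  obtain ⟨F, hF, rfl⟩ := hI
  rwa [← hF.1.eq_facetOfIdx]

lemma eq_setOf_colFun_mem_facetOfIdx {Q : Matrix (Fin d) (Fin m) ℝ} {I : Set ℕ}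
    (hI : I ∈ idxFacets Q) : I = {i | ∃ h : i < m, colFun Q ⟨i, h⟩ ∈ facetOfIdx Q I} := by
  obtain ⟨F, hF, rfl⟩ := hI
  rw [← hF.1.eq_facetOfIdx]

lemma eq_of_mem_idxFacets_of_subset {Q : Matrix (Fin d) (Fin m) ℝ} {J₁ J₂ : Set ℕ}
    (hJ₁ : J₁ ∈ idxFacets Q) (hJ₂ : J₂ ∈ idxFacets Q) {G : Set (Fin d → ℝ)}
    (hG₁ : G ⊆ facetOfIdx Q J₁) (hG₂ : G ⊆ facetOfIdx Q J₂)
    (hG : setDim G = setDim (convOf Q) - 1) : J₁ = J₂ := by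
  have hspan : ∀ {J}, J ∈ idxFacets Q → G ⊆ facetOfIdx Q J →
      facetOfIdx Q J = convOf Q ∩ affineSpan ℝ G := fun hJ hGJ => by
    rw [(isFacet_facetOfIdx hJ).1.eq_inter_affineSpan,
      affineSpan_eq_of_subset_of_setDim_eq hGJ (hG.trans (isFacet_facetOfIdx hJ).2.symm)]
  rw [eq_setOf_colFun_mem_facetOfIdx hJ₁, eq_setOf_colFun_mem_facetOfIdx hJ₂,
    hspan hJ₁ hG₁, hspan hJ₂ hG₂]

end Polytope

/-- Any point of the intrinsic interior will do. -/
lemma Convex.exists_forall_eventually_add_smul_mem {E : Type*} [NormedAddCommGroup E]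
    [NormedSpace ℝ E] [FiniteDimensional ℝ E] {F : Set E} (hF : Convex ℝ F)
    (hne : F.Nonempty) :
    ∃ p ∈ F, ∀ v ∈ (affineSpan ℝ F).direction, ∀ᶠ t in 𝓝 (0 : ℝ), p + t • v ∈ F := by
  obtain ⟨_, hp⟩ := hne.intrinsicInterior hF
  obtain ⟨y, hy, rfl⟩ := mem_intrinsicInterior.1 hp
  refine ⟨y, intrinsicInterior_subset hp, fun v hv => ?_⟩
  let g : ℝ → affineSpan ℝ F := fun t =>
    ⟨t • v +ᵥ (y : E), AffineSubspace.vadd_mem_of_mem_direction (Submodule.smul_mem _ t hv) y.2⟩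
  have hg : Continuous g := by fun_prop
  have hg0 : g 0 = y := by ext; simp [g]
  have := hg.continuousAt.preimage_mem_nhds (hg0 ▸ isOpen_interior.mem_nhds hy)
  filter_upwards [this] with t ht
  simpa [g, vadd_eq_add, add_comm] using interior_subset ht

section Overlap

variable {d : ℕ}

lemma setDim_lt_setDim_inter {X Y F : Set (Fin d → ℝ)} (hX : Convex ℝ X) (hY : Convex ℝ Y)
    (hF : Convex ℝ F) (hFne : F.Nonempty) (hFX : F ⊆ X) (hFY : F ⊆ Y) {c : Fin d → ℝ}
    {c₀ : ℝ} (hspan : (affineSpan ℝ F : Set (Fin d → ℝ)) = {x | c ⬝ᵥ x = c₀})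
    (hXc : ∀ x ∈ X, c ⬝ᵥ x ≤ c₀) (hYc : ∀ y ∈ Y, c ⬝ᵥ y ≤ c₀)
    (hXF : setDim F < setDim X) (hYF : setDim F < setDim Y) :
    setDim F < setDim (X ∩ Y) := by
  have hmem : ∀ {z}, z ∈ affineSpan ℝ F ↔ c ⬝ᵥ z = c₀ := fun {z} => by
    rw [← SetLike.mem_coe, hspan, mem_ofPred_eq]
  have hbelow : ∀ {Z : Set (Fin d → ℝ)}, (∀ z ∈ Z, c ⬝ᵥ z ≤ c₀) → setDim F < setDim Z →
      ∃ z ∈ Z, c ⬝ᵥ z < c₀ := fun hZc hZ => by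
    obtain ⟨z, hz, hzF⟩ := exists_mem_notMem_affineSpan_of_setDim_lt hZ
    exact ⟨z, hz, (hZc z hz).lt_of_ne fun h => hzF (hmem.2 h)⟩
  obtain ⟨x₀, hx₀, hx₀c⟩ := hbelow hXc hXF
  obtain ⟨y₀, hy₀, hy₀c⟩ := hbelow hYc hYF
  obtain ⟨p, hp, hcore⟩ := hF.exists_forall_eventually_add_smul_mem hFne
  have hpc : c ⬝ᵥ p = c₀ := hmem.1 (subset_affineSpan ℝ F hp)
  set α := c₀ - c ⬝ᵥ x₀
  set β := c₀ - c ⬝ᵥ y₀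
  have hα : 0 < α := sub_pos.2 hx₀c
  have hβ : 0 < β := sub_pos.2 hy₀c
  set v := β • (x₀ - p) - α • (y₀ - p)
  have hv : v ∈ (affineSpan ℝ F).direction := by
    have hpv : v + p ∈ affineSpan ℝ F := hmem.2 (by
      simp only [v, dotProduct_add, dotProduct_sub, dotProduct_smul, smul_eq_mul, hpc]
      ring)
    simpa using AffineSubspace.vsub_mem_direction hpv (subset_affineSpan ℝ F hp)
  have h₁ : ∀ᶠ t in 𝓝[>] (0 : ℝ), p + t • v ∈ F := (hcore v hv).filter_mono nhdsWithin_le_nhds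
  have h₂ : ∀ᶠ t in 𝓝[>] (0 : ℝ), 0 < t := self_mem_nhdsWithin
  have h₃ : ∀ᶠ t in 𝓝[>] (0 : ℝ), t < 1 / β :=
    (eventually_lt_nhds (one_div_pos.2 hβ)).filter_mono nhdsWithin_le_nhds
  obtain ⟨t, htF, ht, htβ⟩ := (h₁.and (h₂.and h₃)).exists
  have htβ' : t * β < 1 := by rwa [lt_div_iff₀ hβ] at htβ
  -- `z` lies below the hyperplane, on the segment from `p` to `x₀` and on the segment from
  -- `p + t • v ∈ F` to `y₀`
  set z := p + (t * β / (1 + t * α)) • (x₀ - p)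
  have hzX : z ∈ X := hX.add_smul_sub_mem (hFX hp) hx₀
    ⟨by positivity, (div_le_one (by positivity)).2 (by nlinarith)⟩
  have hzY : z ∈ Y := by
    have hz : z = (p + t • v) + (t * α / (1 + t * α)) • (y₀ - (p + t • v)) := by
      simp only [z, v]
      match_scalars <;> field_simp <;> ring
    rw [hz]
    exact hY.add_smul_sub_mem (hFY htF) hy₀
      ⟨by positivity, (div_le_one (by positivity)).2 (by linarith)⟩
  have hzc : c ⬝ᵥ z ≠ c₀ := by
    simp only [z, dotProduct_add, dotProduct_smul, dotProduct_sub, smul_eq_mul, hpc]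
    have : 0 < t * β / (1 + t * α) * α := by positivity
    intro h
    linarith
  exact setDim_lt_of_mem_notMem_affineSpan (subset_inter hFX hFY) ⟨hzX, hzY⟩
    (fun h => hzc (hmem.1 h))

end Overlap

section Similarity

variable {d m m' : ℕ} {τ : (Fin d → ℝ) ≃ᵃ[ℝ] (Fin d → ℝ)}
  {Q : Matrix (Fin d) (Fin m) ℝ} {Q' : Matrix (Fin d) (Fin m') ℝ}

lemma SimBy.symm (h : SimBy τ Q Q') : SimBy τ.symm Q' Q := by
  obtain ⟨rfl, h⟩ := h
  exact ⟨rfl, fun i hi hi' => by rw [h i hi' hi, AffineEquiv.symm_apply_apply]⟩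

lemma SimBy.of_heq {m₁ m₁' : ℕ} {Q₁ : Matrix (Fin d) (Fin m₁) ℝ}
    {Q₁' : Matrix (Fin d) (Fin m₁') ℝ} (h : SimBy τ Q Q') (hm : m = m₁) (hQ : Q ≍ Q₁)
    (hm' : m' = m₁') (hQ' : Q' ≍ Q₁') : SimBy τ Q₁ Q₁' := by
  subst hm hm'
  cases hQ
  cases hQ'
  exact h

lemma SimBy.convOf_eq (h : SimBy τ Q Q') : convOf Q' = τ '' convOf Q := by
  obtain ⟨rfl, h⟩ := h
  have hcol : colFun Q' = τ ∘ colFun Q := funext fun i => h i i.2 i.2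
  rw [convOf, convOf, hcol, range_comp, ← AffineEquiv.coe_toAffineMap,
    AffineMap.image_convexHull]

lemma SimBy.facetOfIdx_eq (h : SimBy τ Q Q') (I : Set ℕ) :
    facetOfIdx Q' I = τ '' facetOfIdx Q I := by
  obtain ⟨rfl, h⟩ := h
  rw [facetOfIdx, facetOfIdx, ← AffineEquiv.coe_toAffineMap, AffineMap.image_convexHull]
  congr 1
  ext x
  simp [h _ _ (Fin.is_lt _), eq_comm]

lemma SimBy.idxFacets_subset (h : SimBy τ Q Q') : idxFacets Q ⊆ idxFacets Q' := by
  rintro _ ⟨F, hF, rfl⟩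
  refine ⟨τ '' F, h.convOf_eq ▸ hF.image τ, ?_⟩
  obtain ⟨rfl, h⟩ := h
  ext i
  simp only [mem_ofPred_eq]
  exact exists_congr fun hi => by rw [h i hi hi, τ.injective.mem_set_image]

lemma SimBy.idxFacets_eq (h : SimBy τ Q Q') : idxFacets Q' = idxFacets Q :=
  h.symm.idxFacets_subset.antisymm h.idxFacets_subset

lemma SimBy.mul {k : ℕ} {M : Matrix (Fin m) (Fin k) ℝ} (hM : ∀ col, ∑ i, M i col = 1)
    {Q₁ : Matrix (Fin d) (Fin m) ℝ} (h : SimBy τ Q Q₁) : SimBy τ (Q * M) (Q₁ * M) := by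
  have hcol : ∀ (P : Matrix (Fin d) (Fin m) ℝ) col,
      colFun (P * M) col = ∑ i, M i col • colFun P i := fun P col => by
    funext r
    simp [colFun, Matrix.mul_apply, Finset.sum_apply, mul_comm]
  have hτ : ∀ (w : Fin m → ℝ) (p : Fin m → Fin d → ℝ), ∑ i, w i = 1 →
      τ (∑ i, w i • p i) = ∑ i, w i • τ (p i) := fun w p hw => by
    rw [← Finset.univ.affineCombination_eq_linear_combination p w hw,
      ← Finset.univ.affineCombination_eq_linear_combination _ w hw,
      ← AffineEquiv.coe_toAffineMap, Finset.map_affineCombination _ _ _ hw]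
    rfl
  refine ⟨rfl, fun col hc _ => ?_⟩
  rw [hcol, hcol, hτ _ _ (hM _)]
  exact Finset.sum_congr rfl fun i _ => by rw [h.2 i i.2 i.2]

end Similarity

lemma dite_some_choose_eq_some_iff {α : Type*} {P : α → Prop} [Decidable (∃ a, P a)]
    (huniq : ∀ a₁ a₂, P a₁ → P a₂ → a₁ = a₂) {a : α} :
    (if h : ∃ a, P a then some h.choose else none) = some a ↔ P a := by
  refine ⟨fun h => ?_, fun ha => ?_⟩
  · split_ifs at h with hex
    exact Option.some_inj.1 h ▸ hex.choose_spec
  · rw [dif_pos ⟨a, ha⟩, huniq _ _ (Exists.choose_spec _) ha]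

namespace BSpec

variable {d b : ℕ} {S : Type}

section Subtrees

variable (sp : BSpec d b S) {τ : (Fin d → ℝ) ≃ᵃ[ℝ] (Fin d → ℝ)}

lemma st_append (v u : List (Fin b)) : sp.st (v ++ u) = u.foldl sp.Sc (sp.st v) :=
  List.foldl_append

lemma qfrom_append (s : S) (u w : List (Fin b)) (Q : Matrix (Fin d) (Fin (sp.n s)) ℝ) :
    sp.Qfrom s (u ++ w) Q ≍ sp.Qfrom (u.foldl sp.Sc s) w (sp.Qfrom s u Q) := by
  induction u generalizing s Q with
  | nil => rfl
  | cons j u ih => exact ih _ _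

lemma simBy_qfrom {s s' : S} (hs : s = s') {Q : Matrix (Fin d) (Fin (sp.n s)) ℝ}
    {Q' : Matrix (Fin d) (Fin (sp.n s')) ℝ} (h : SimBy τ Q Q') (u : List (Fin b)) :
    SimBy τ (sp.Qfrom s u Q) (sp.Qfrom s' u Q') := by
  subst hs
  induction u generalizing s with
  | nil => exact h
  | cons j u ih => exact ih (h.mul (sp.M_trans s j))

lemma simBy_qm_append {v w : List (Fin b)} (hst : sp.st v = sp.st w)
    (h : SimBy τ (sp.Qm v) (sp.Qm w)) (u : List (Fin b)) :
    SimBy τ (sp.Qm (v ++ u)) (sp.Qm (w ++ u)) :=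
  (sp.simBy_qfrom hst h u).of_heq (by rw [st_append]) (sp.qfrom_append _ v u _).symm
    (by rw [st_append]) (sp.qfrom_append _ w u _).symm

end Subtrees

variable {sp : BSpec d b S} {τ : (Fin d → ℝ) ≃ᵃ[ℝ] (Fin d → ℝ)}

lemma GeomNbr.of_simBy {v₁ v₂ w₁ w₂ : List (Fin b)} {I : Set ℕ} (hg : sp.GeomNbr v₁ v₂ I)
    (h₁ : SimBy τ (sp.Qm v₁) (sp.Qm w₁)) (h₂ : SimBy τ (sp.Qm v₂) (sp.Qm w₂))
    (hlen : w₁.length = w₂.length) (hne : w₁ ≠ []) : sp.GeomNbr w₁ w₂ I := by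
  obtain ⟨-, -, hI, hint, hfacet⟩ := hg
  refine ⟨hlen, hne, h₁.idxFacets_eq ▸ hI, ?_, ?_⟩
  · rw [h₁.convOf_eq, h₂.convOf_eq, ← image_inter τ.injective, hint, h₁.facetOfIdx_eq]
  · rw [h₁.convOf_eq, h₂.convOf_eq, ← image_inter τ.injective]
    exact hfacet.image τ

lemma GeomNbr.append_singleton_of_simBy {v v' w w' : List (Fin b)} {j k : Fin b}
    {I : Set ℕ} (hg : sp.GeomNbr (v ++ [j]) (v' ++ [k]) I) (hst : sp.st v = sp.st w)
    (hst' : sp.st v' = sp.st w') (h : SimBy τ (sp.Qm v) (sp.Qm w))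
    (h' : SimBy τ (sp.Qm v') (sp.Qm w')) (hlen : w.length = w'.length) :
    sp.GeomNbr (w ++ [j]) (w' ++ [k]) I :=
  hg.of_simBy (sp.simBy_qm_append hst h [j]) (sp.simBy_qm_append hst' h' [k])
    (by simp [hlen]) (by simp)

lemma GeomNbr.facetOfIdx_append_subset (hR2 : ∀ (w : List (Fin b)) (j : Fin b),
      convOf (sp.Qm (w ++ [j])) ⊆ convOf (sp.Qm w))
    {v v' : List (Fin b)} {j k : Fin b} {I J : Set ℕ} (hJ : sp.GeomNbr v v' J)
    (hI : sp.GeomNbr (v ++ [j]) (v' ++ [k]) I) :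
    facetOfIdx (sp.Qm (v ++ [j])) I ⊆ facetOfIdx (sp.Qm v) J := by
  rw [← hI.2.2.2.1, ← hJ.2.2.2.1]
  exact inter_subset_inter (hR2 v j) (hR2 v' k)

lemma GeomNbr.le_dotProduct (hpre : sp.PreRegular) (hd : 0 < d) {x y : List (Fin b)}
    {I : Set ℕ} (h : sp.GeomNbr x y I) {c : Fin d → ℝ} {c₀ : ℝ}
    (hXc : ∀ z ∈ convOf (sp.Qm x), c ⬝ᵥ z ≤ c₀)
    (hspan : (affineSpan ℝ (facetOfIdx (sp.Qm x) I) : Set (Fin d → ℝ)) = {z | c ⬝ᵥ z = c₀}) :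
    ∀ z ∈ convOf (sp.Qm y), c₀ ≤ c ⬝ᵥ z := by
  obtain ⟨-, -, hI, hint, hfacet⟩ := h
  have hX := (isFacet_facetOfIdx hI).2
  rw [hint] at hfacet
  have hFne : (facetOfIdx (sp.Qm x) I).Nonempty := nonempty_of_setDim_nonneg (by
    rw [hX, hpre.2 x]; omega)
  -- on the near side, `convOf (Qm x) ∩ convOf (Qm y)` would have bigger dimension than the
  -- facet it equals
  refine (hfacet.1.subset_halfspace_or (convex_convOf _) hspan).resolve_left
    fun hYc => ?_
  have := setDim_lt_setDim_inter (convex_convOf _) (convex_convOf _)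
    (convex_facetOfIdx _ _) hFne (hint ▸ inter_subset_left) (hint ▸ inter_subset_right)
    hspan hXc hYc (by omega) (by have := hfacet.2; omega)
  rw [hint] at this
  exact this.false

/-- Both neighbors lie on the far side of the facet, so they would overlap in full dimension. -/
lemma GeomNbr.unique (hreg : sp.Regular) (hd : 0 < d) {x y y' : List (Fin b)} {I : Set ℕ}
    (h : sp.GeomNbr x y I) (h' : sp.GeomNbr x y' I) : y = y' := by
  have hF := isFacet_facetOfIdx h.2.2.1
  obtain ⟨c, c₀, hXc, hspan⟩ := hF.exists_affineSpan_eq_hyperplane (hreg.1.2 x) hd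
  have hspan' : (affineSpan ℝ (facetOfIdx (sp.Qm x) I) : Set (Fin d → ℝ)) =
      {z | -c ⬝ᵥ z = -c₀} := by
    simp [hspan, neg_dotProduct]
  have hfar : ∀ {y}, sp.GeomNbr x y I → facetOfIdx (sp.Qm x) I ⊆ convOf (sp.Qm y) ∧
      (∀ z ∈ convOf (sp.Qm y), -c ⬝ᵥ z ≤ -c₀) ∧
      setDim (facetOfIdx (sp.Qm x) I) < setDim (convOf (sp.Qm y)) := fun {y} hy => by
    obtain ⟨-, -, -, hint, hfacet⟩ := id hy
    refine ⟨hint ▸ inter_subset_right, fun z hz => ?_, ?_⟩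
    · rw [neg_dotProduct, neg_le_neg_iff]
      exact hy.le_dotProduct hreg.1 hd hXc hspan z hz
    · have := (hint ▸ hfacet).2; omega
  obtain ⟨hFY, hYc, hdimY⟩ := hfar h
  obtain ⟨hFY', hY'c, hdimY'⟩ := hfar h'
  have hFne := nonempty_of_setDim_nonneg (s := facetOfIdx (sp.Qm x) I) (by
    rw [hF.2, hreg.1.2 x]; omega)
  have hlt := setDim_lt_setDim_inter (convex_convOf _) (convex_convOf _)
    (convex_facetOfIdx _ _) hFne hFY hFY' hspan' hYc hY'c hdimY hdimY'
  rw [hF.2, hreg.1.2 x] at hlt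
  exact (hreg.2.2.2 y y' (h.1.symm.trans h'.1)).1 (le_antisymm (setDim_le _) (by omega))

lemma GeomNbr.parent (hreg : sp.Regular) {v v' : List (Fin b)} {j k : Fin b} {I : Set ℕ}
    (h : sp.GeomNbr (v ++ [j]) (v' ++ [k]) I) (hvv' : v ≠ v') : ∃ J, sp.GeomNbr v v' J := by
  obtain ⟨hpre, -, hR2, hR3⟩ := hreg
  have hlen : v.length = v'.length := by simpa using h.1
  have hsub : facetOfIdx (sp.Qm (v ++ [j])) I ⊆ convOf (sp.Qm v) ∩ convOf (sp.Qm v') :=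
    h.2.2.2.1 ▸ inter_subset_inter (hR2 v j) (hR2 v' k)
  have hge := setDim_mono hsub
  rw [(isFacet_facetOfIdx h.2.2.1).2, hpre.2] at hge
  rcases (setDim_le (convOf (sp.Qm v) ∩ convOf (sp.Qm v'))).eq_or_lt with heq | hlt
  · exact absurd ((hR3 v v' hlen).1 heq) hvv'
  · obtain ⟨J, -, hJ⟩ := (hR3 v v' hlen).2 (by omega)
    exact ⟨J, hJ⟩

/-- The parent facet is the unique facet of the parent containing the children's common facet,
and (P1) carries this configuration from `v` to `w`. -/
lemma GeomNbr.parent_facet_eq (hpre : sp.PreRegular) (hR2 : ∀ (w : List (Fin b)) (j : Fin b),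
      convOf (sp.Qm (w ++ [j])) ⊆ convOf (sp.Qm w))
    {v v' w w' : List (Fin b)} {j k k' : Fin b} {I J J' : Set ℕ}
    (hv : sp.GeomNbr v v' J) (hvc : sp.GeomNbr (v ++ [j]) (v' ++ [k]) I)
    (hw : sp.GeomNbr w w' J') (hwc : sp.GeomNbr (w ++ [j]) (w' ++ [k']) I)
    (hst : sp.st v = sp.st w) : J = J' := by
  obtain ⟨τ, hτ⟩ := hpre.1 v w hst
  have hsub : facetOfIdx (sp.Qm (w ++ [j])) I ⊆ facetOfIdx (sp.Qm w) J := by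
    rw [(sp.simBy_qm_append hst hτ [j]).facetOfIdx_eq, hτ.facetOfIdx_eq]
    exact image_mono (hv.facetOfIdx_append_subset hR2 hvc)
  refine eq_of_mem_idxFacets_of_subset (hτ.idxFacets_eq ▸ hv.2.2.1) hw.2.2.1 hsub
    (hw.facetOfIdx_append_subset hR2 hwc) ?_
  rw [(isFacet_facetOfIdx hwc.2.2.1).2, hpre.2, hpre.2]

section Lookup

variable (hreg : sp.Regular)
include hreg

lemma nlook_eq_some_iff (hd : 0 < d) {w : List (Fin b)} {j k : Fin b} {I : Set ℕ} :
    sp.Nlook j (sp.st w) I = some k ↔ sp.GeomNbr (w ++ [j]) (w ++ [k]) I := by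
  have hP : ∀ k, (∃ v, sp.st v = sp.st w ∧ sp.GeomNbr (v ++ [j]) (v ++ [k]) I) ↔
      sp.GeomNbr (w ++ [j]) (w ++ [k]) I := fun k => by
    refine ⟨fun ⟨v, hst, h⟩ => ?_, fun h => ⟨w, rfl, h⟩⟩
    obtain ⟨τ, hτ⟩ := hreg.1.1 v w hst
    exact h.append_singleton_of_simBy hst hst hτ hτ rfl
  classical
  rw [Nlook, dite_some_choose_eq_some_iff, hP]
  intro k₁ k₂ h₁ h₂
  rw [hP] at h₁ h₂
  simpa using h₁.unique hreg hd h₂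

lemma nlook_eq_none_iff (hd : 0 < d) {w : List (Fin b)} {j : Fin b} {I : Set ℕ} :
    sp.Nlook j (sp.st w) I = none ↔ ∀ k, ¬ sp.GeomNbr (w ++ [j]) (w ++ [k]) I := by
  simp only [Option.eq_none_iff_forall_ne_some, ne_eq, nlook_eq_some_iff hreg hd]

lemma fplook_eq_some_iff {w : List (Fin b)} {j : Fin b} {I J : Set ℕ} :
    sp.Fplook j (sp.st w) I = some J ↔ ∃ (v v' : List (Fin b)) (k : Fin b),
      sp.st v = sp.st w ∧ sp.GeomNbr v v' J ∧ sp.GeomNbr (v ++ [j]) (v' ++ [k]) I := by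
  classical
  rw [Fplook, dite_some_choose_eq_some_iff]
  rintro J₁ J₂ ⟨v₁, v₁', k₁, hst₁, h₁, hc₁⟩ ⟨v₂, v₂', k₂, hst₂, h₂, hc₂⟩
  exact h₁.parent_facet_eq hreg.1 hreg.2.2.1 hc₁ h₂ hc₂ (hst₁.trans hst₂.symm)

lemma omlook_eq_some_iff (hd : 0 < d) {s s' : S} {j k : Fin b} {I : Set ℕ} :
    sp.Omlook j s s' I = some k ↔ ∃ (v v' : List (Fin b)) (J : Set ℕ),
      sp.st v = s ∧ sp.st v' = s' ∧ sp.GeomNbr v v' J ∧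
        sp.GeomNbr (v ++ [j]) (v' ++ [k]) I := by
  classical
  rw [Omlook, dite_some_choose_eq_some_iff]
  rintro k₁ k₂ ⟨v₁, v₁', J₁, rfl, rfl, h₁, hc₁⟩ ⟨v₂, v₂', J₂, hst, hst', h₂, hc₂⟩
  obtain rfl := h₁.parent_facet_eq hreg.1 hreg.2.2.1 hc₁ h₂ hc₂ hst.symm
  obtain ⟨τ, hτ, hτ'⟩ := hreg.2.1 v₁ v₁' v₂ v₂' J₁ h₁ h₂ hst.symm hst'.symm
  have := hc₁.append_singleton_of_simBy hst.symm hst'.symm hτ hτ' h₂.1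
  simpa using this.unique hreg hd hc₂

lemma geomNbr_append_singleton_iff (hd : 0 < d) {w w' : List (Fin b)} {j k : Fin b} {I : Set ℕ} :
    sp.GeomNbr (w ++ [j]) (w' ++ [k]) I ↔
      (w' = w ∧ sp.Nlook j (sp.st w) I = some k) ∨
      (sp.Nlook j (sp.st w) I = none ∧ ∃ J, sp.Fplook j (sp.st w) I = some J ∧
        sp.GeomNbr w w' J ∧ sp.Omlook j (sp.st w) (sp.st w') I = some k) := by
  constructor
  · intro h
    by_cases hw : w' = w
    · subst hw
      exact Or.inl ⟨rfl, (nlook_eq_some_iff hreg hd).2 h⟩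
    obtain ⟨J, hJ⟩ := h.parent hreg (Ne.symm hw)
    refine Or.inr ⟨(nlook_eq_none_iff hreg hd).2 fun k' hk' => hw ?_, J,
      (fplook_eq_some_iff hreg).2 ⟨w, w', k, rfl, hJ, h⟩, hJ,
      (omlook_eq_some_iff hreg hd).2 ⟨w, w', J, rfl, rfl, hJ, h⟩⟩
    exact (List.append_inj' (h.unique hreg hd hk') rfl).1
  · rintro (⟨rfl, hN⟩ | ⟨-, J, hF, hJ, hΩ⟩)
    · exact (nlook_eq_some_iff hreg hd).1 hN
    obtain ⟨v, v', J₀, hst, hst', hJ₀, hc⟩ := (omlook_eq_some_iff hreg hd).1 hΩ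
    obtain ⟨u, u', k', hstu, hJu, hcu⟩ := (fplook_eq_some_iff hreg).1 hF
    obtain rfl := hJ₀.parent_facet_eq hreg.1 hreg.2.2.1 hc hJu hcu (hst.trans hstu.symm)
    obtain ⟨τ, hτ, hτ'⟩ := hreg.2.1 v v' w w' J₀ hJ₀ hJ hst hst'
    exact hc.append_singleton_of_simBy hst hst' hτ hτ' hJ.1

end Lookup

lemma not_algNbr_nil_left (k : ℕ) (I : Set ℕ) (y : List (Fin b)) : ¬ sp.AlgNbr k I [] y := by
  rcases k with _ | _ | k <;> simp [AlgNbr]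

lemma not_algNbr_nil_right (k : ℕ) (I : Set ℕ) (x : List (Fin b)) : ¬ sp.AlgNbr k I x [] := by
  rcases k with _ | _ | k <;> simp [AlgNbr]

lemma exists_algNbr_append_singleton_iff {w w' : List (Fin b)} {j k : Fin b} {I : Set ℕ} :
    (∃ n, 1 ≤ n ∧ sp.AlgNbr n I (w ++ [j]) (w' ++ [k])) ↔
      (w' = w ∧ sp.Nlook j (sp.st w) I = some k) ∨
      (sp.Nlook j (sp.st w) I = none ∧ ∃ J, sp.Fplook j (sp.st w) I = some J ∧
        (∃ n, 1 ≤ n ∧ sp.AlgNbr n J w w') ∧ sp.Omlook j (sp.st w) (sp.st w') I = some k) := by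
  constructor
  · rintro ⟨_ | _ | n, hn, h⟩
    · omega
    · exact Or.inl (by simpa [AlgNbr] using h)
    · obtain ⟨hN, J, hF, hA, hΩ⟩ : sp.Nlook j (sp.st w) I = none ∧ ∃ J,
          sp.Fplook j (sp.st w) I = some J ∧ sp.AlgNbr (n + 1) J w w' ∧
            sp.Omlook j (sp.st w) (sp.st w') I = some k := by simpa [AlgNbr] using h
      exact Or.inr ⟨hN, J, hF, ⟨n + 1, by omega, hA⟩, hΩ⟩
  · rintro (h | ⟨hN, J, hF, ⟨_ | n, hn, hA⟩, hΩ⟩)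
    · exact ⟨1, le_rfl, by simpa [AlgNbr] using h⟩
    · omega
    · exact ⟨n + 2, by omega, by simpa [AlgNbr] using ⟨hN, J, hF, hA, hΩ⟩⟩

end BSpec

theorem geometric_iff_algebraic_neighbor_general {d b : ℕ} (hd : 2 ≤ d)
    {S : Type} (sp : BSpec d b S) (hreg : sp.Regular) :
    ∀ (x y : List (Fin b)) (I : Set ℕ),
      sp.GeomNbr x y I ↔ ∃ k : ℕ, 1 ≤ k ∧ sp.AlgNbr k I x y := by
  intro x
  induction x using List.reverseRecOn with
  | nil => simp [BSpec.GeomNbr, BSpec.not_algNbr_nil_left]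
  | append_singleton w j ih =>
    intro y I
    rcases y.eq_nil_or_concat' with rfl | ⟨w', k, rfl⟩
    · simp [BSpec.GeomNbr, BSpec.not_algNbr_nil_right]
    rw [BSpec.geomNbr_append_singleton_iff hreg (by omega),
      BSpec.exists_algNbr_append_singleton_iff]
    simp only [ih]

theorem geometric_iff_algebraic_neighbor {d b : ℕ} (hd : 2 ≤ d) (hb : 2 ≤ b)
    {S : Type} [Finite S] (sp : BSpec d b S) (hreg : sp.Regular) :
    ∀ (x y : List (Fin b)) (I : Set ℕ),
      sp.GeomNbr x y I ↔ ∃ k : ℕ, 1 ≤ k ∧ sp.AlgNbr k I x y :=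
  geometric_iff_algebraic_neighbor_general hd sp hreg
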